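/- Define H(x,y) = 2y[ψ'(yx) + ψ'(y(1−x))] + y²[x·ψ''(yx) + (1−x)·ψ''(y(1−x))] for x ∈ (0,1), y > 0. Then for every fixed x ∈ (0,1), the function y ↦ H(x,y) is strictly increasing on (0,∞); equivalently, 2ψ'(yx) + 4yx·ψ''(yx) + y²x²·ψ'''(yx) + 2ψ'(y(1−x)) + 4y(1−x)·ψ''(y(1−x)) + y²(1−x)²·ψ'''(y(1−x)) > 0 for all x ∈ (0,1), y > 0. -/

import Mathlib

/-!
Write `E u = 2ψ'(u) + 4uψ''(u) + u²ψ'''(u)`, the second derivative of `u ↦ u² ψ'(u)`; then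
`∂H/∂y (x, y) = E (y x) + E (y (1 - x))`, so it suffices to show `E > 0` on `(0, ∞)`.
From the Gauss product, `ψ'(u) = ∑ₖ (u + k)⁻²`, hence `E u = ∑ₖ 2k(k - 2u) / (u + k)⁴`, whose terms
change sign. Writing `(u + k)^(-n-1) = ∫₀^∞ sⁿ e^(-(u+k)s) ds / n!` and summing the geometric series
under the integral gives `E u = ∫₀^∞ e^(-us) s² f''(s) ds` with `f s = s / (1 - e^(-s))`, and
`f'' > 0` is the inequality `2 tanh (s / 2) < s`.
-/

open Real Set

/-- The digamma function `ψ`, the logarithmic derivative of the Gamma function. -/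
noncomputable def digamma (x : ℝ) : ℝ :=
  deriv (fun t : ℝ => Real.log (Real.Gamma t)) x

/-- The trigamma function `ψ'`, the derivative of the digamma function. -/
noncomputable def trigamma (x : ℝ) : ℝ := deriv digamma x

/-- The second derivative `ψ''` of the digamma function. -/
noncomputable def tetragamma (x : ℝ) : ℝ := deriv trigamma x

/-- The third derivative `ψ'''` of the digamma function. -/
noncomputable def pentagamma (x : ℝ) : ℝ := deriv tetragamma x

/-- `H(x,y) = 2y[ψ'(yx) + ψ'(y(1−x))] + y²[x·ψ''(yx) + (1−x)·ψ''(y(1−x))]`. -/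
noncomputable def Hfun (x y : ℝ) : ℝ :=
  2 * y * (trigamma (y * x) + trigamma (y * (1 - x))) +
    y ^ 2 * (x * tetragamma (y * x) + (1 - x) * tetragamma (y * (1 - x)))

open Filter Topology MeasureTheory
open scoped Nat

noncomputable def hurwitzSum (m : ℕ) (x : ℝ) : ℝ := ∑' k : ℕ, ((x + k) ^ m)⁻¹

lemma summable_inv_add_pow (x : ℝ) {m : ℕ} (hm : 2 ≤ m) :
    Summable fun k : ℕ => ((x + k) ^ m)⁻¹ := by
  refine .of_norm (((summable_one_div_nat_add_rpow x m).2 (by exact_mod_cast hm)).congr fun k => ?_)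
  rw [norm_inv, norm_pow, Real.norm_eq_abs, rpow_natCast, one_div, add_comm]

lemma hurwitzSum_eq_inv_pow_add (x : ℝ) {m : ℕ} (hm : 2 ≤ m) :
    hurwitzSum m x = (x ^ m)⁻¹ + hurwitzSum m (x + 1) := by
  rw [hurwitzSum, (summable_inv_add_pow x hm).tsum_eq_zero_add, hurwitzSum]
  simp only [Nat.cast_zero, add_zero]
  congr 1
  exact tsum_congr fun k => by push_cast; ring_nf

lemma hasDerivAt_inv_add_pow (m : ℕ) {c t : ℝ} (h : t + c ≠ 0) :
    HasDerivAt (fun t => ((t + c) ^ m)⁻¹) (-m * ((t + c) ^ (m + 1))⁻¹) t := by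
  have h1 : HasDerivAt (fun t => (t + c) ^ m) (m * (t + c) ^ (m - 1)) t := by
    simpa using ((hasDerivAt_id' t).add_const c).fun_pow m
  refine (h1.fun_inv (pow_ne_zero m h)).congr_deriv ?_
  rcases m with _ | m
  · simp
  · rw [Nat.add_sub_cancel]
    field_simp
    ring

lemma hasDerivAt_hurwitzSum {m : ℕ} (hm : 2 ≤ m) {x : ℝ} (hx : 0 < x) :
    HasDerivAt (hurwitzSum m) (-m * hurwitzSum (m + 1) x) x := by
  have hx2 : x ∈ Ioi (x / 2) := mem_Ioi.2 (by linarith)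
  have key := hasDerivAt_tsum_of_isPreconnected
    (g := fun (k : ℕ) (t : ℝ) => ((t + k) ^ m)⁻¹)
    (g' := fun (k : ℕ) (t : ℝ) => -m * ((t + k) ^ (m + 1))⁻¹)
    (u := fun k : ℕ => m * ((x / 2 + k) ^ (m + 1))⁻¹)
    ((summable_inv_add_pow _ (by omega)).mul_left _) isOpen_Ioi isPreconnected_Ioi
    (fun k t ht => hasDerivAt_inv_add_pow m ?_)
    (fun k t ht => ?_) hx2 (summable_inv_add_pow x hm) hx2
  · rw [hurwitzSum, ← tsum_mul_left]
    exact key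
  · simp only [mem_Ioi] at ht
    exact ne_of_gt (by linarith [Nat.cast_nonneg (α := ℝ) k])
  · simp only [mem_Ioi] at ht
    have : 0 < x / 2 + k := by positivity
    rw [norm_mul, norm_neg, Real.norm_natCast, norm_inv, norm_pow,
      Real.norm_of_nonneg (by linarith)]
    gcongr

/-- `digammaSeries x = ψ (x + 1)`. -/
noncomputable def digammaSeries (x : ℝ) : ℝ :=
  -eulerMascheroniConstant + ∑' k : ℕ, ((k + 1 : ℝ)⁻¹ - (x + k + 1)⁻¹)

lemma summable_inv_add_one_sq : Summable fun k : ℕ => ((k + 1 : ℝ) ^ 2)⁻¹ := by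
  simpa [add_comm] using summable_inv_add_pow 1 le_rfl

lemma abs_inv_sub_inv_le {x : ℝ} (hx : 0 ≤ x) (k : ℕ) :
    |(k + 1 : ℝ)⁻¹ - (x + k + 1)⁻¹| ≤ x * ((k + 1 : ℝ) ^ 2)⁻¹ := by
  have hk : (0 : ℝ) < k + 1 := by positivity
  have e : (k + 1 : ℝ)⁻¹ - (x + k + 1)⁻¹ = x / ((k + 1) * (x + k + 1)) := by
    field_simp
    ring
  rw [e, abs_of_nonneg (by positivity), ← div_eq_mul_inv, sq]
  gcongr
  linarith

lemma summable_digammaSeries {x : ℝ} (hx : 0 ≤ x) :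
    Summable fun k : ℕ => (k + 1 : ℝ)⁻¹ - (x + k + 1)⁻¹ :=
  .of_norm_bounded (summable_inv_add_one_sq.mul_left x) (abs_inv_sub_inv_le hx)

lemma hasDerivAt_log_Gamma_add_log {x : ℝ} (hx : 0 < x) :
    HasDerivAt (fun t => log (Gamma t) + log t) (digammaSeries x) x := by
  refine hasDerivAt_of_tendstoUniformlyOn (l := atTop) (s := Ioo 0 (x + 1)) isOpen_Ioo
    (f := fun n t => BohrMollerup.logGammaSeq t n + log t)
    (f' := fun n t => (log n - harmonic n) + ∑ k ∈ Finset.range n, ((k + 1 : ℝ)⁻¹ - (t + k + 1)⁻¹))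
    ?_ ?_ (fun t ht => (BohrMollerup.tendsto_log_gamma ht.1).add_const _) ⟨hx, by linarith⟩
  · have hγ : Tendsto (fun n : ℕ => log n - harmonic n) atTop (𝓝 (-eulerMascheroniConstant)) := by
      simpa using tendsto_harmonic_sub_log.neg
    refine (hγ.tendstoUniformlyOn_const _).add
      (tendstoUniformlyOn_tsum_nat (summable_inv_add_one_sq.mul_left (x + 1)) fun k t ht => ?_)
    exact (abs_inv_sub_inv_le ht.1.le k).trans (by gcongr; exact ht.2.le)
  · filter_upwards with n t ht
    have hlog : HasDerivAt (fun t => ∑ m ∈ Finset.range (n + 1), log (t + m))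
        (∑ m ∈ Finset.range (n + 1), 1 / (t + m)) t :=
      HasDerivAt.fun_sum fun m _ =>
        ((hasDerivAt_id' t).add_const _).log (by linarith [ht.1, Nat.cast_nonneg (α := ℝ) m])
    refine ((((hasDerivAt_mul_const (log n)).add_const _).sub hlog).add
      (hasDerivAt_log ht.1.ne')).congr_deriv ?_
    rw [Finset.sum_range_succ', Finset.sum_sub_distrib, harmonic]
    push_cast
    ring_nf

lemma digamma_eq {x : ℝ} (hx : 0 < x) : digamma x = digammaSeries x - x⁻¹ := by
  have h := (hasDerivAt_log_Gamma_add_log hx).fun_sub (hasDerivAt_log hx.ne')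
  simp only [add_sub_cancel_right] at h
  exact h.deriv

lemma hasDerivAt_digammaSeries {x : ℝ} (hx : 0 < x) :
    HasDerivAt digammaSeries (hurwitzSum 2 (x + 1)) x := by
  have hx2 : x ∈ Ioi (x / 2) := mem_Ioi.2 (by linarith)
  have key := hasDerivAt_tsum_of_isPreconnected
    (g := fun (k : ℕ) (t : ℝ) => (k + 1 : ℝ)⁻¹ - (t + k + 1)⁻¹)
    (g' := fun (k : ℕ) (t : ℝ) => ((t + k + 1) ^ 2)⁻¹)
    (summable_inv_add_pow (x / 2 + 1) le_rfl) isOpen_Ioi isPreconnected_Ioi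
    (fun k t ht => ?_) (fun k t ht => ?_) hx2 (summable_digammaSeries hx.le) hx2
  · refine (key.const_add _).congr_deriv ?_
    exact tsum_congr fun k => by ring_nf
  · simp only [mem_Ioi] at ht
    have htk : t + k + 1 ≠ 0 := ne_of_gt (by linarith [Nat.cast_nonneg (α := ℝ) k])
    refine ((((hasDerivAt_id' t).add_const (k : ℝ)).add_const 1).fun_inv htk).const_sub _
      |>.congr_deriv ?_
    ring
  · simp only [mem_Ioi] at ht
    have : 0 < x / 2 + 1 + k := by positivity
    rw [norm_inv, norm_pow, Real.norm_of_nonneg (by linarith)]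
    exact inv_anti₀ (by positivity) (pow_le_pow_left₀ this.le (by linarith) 2)

lemma trigamma_eq {x : ℝ} (hx : 0 < x) : trigamma x = hurwitzSum 2 x := by
  have hψ : digamma =ᶠ[𝓝 x] fun t => digammaSeries t - t⁻¹ :=
    eventuallyEq_of_mem (Ioi_mem_nhds hx) fun t ht => digamma_eq ht
  rw [trigamma, hψ.deriv_eq, ((hasDerivAt_digammaSeries hx).fun_sub (hasDerivAt_inv hx.ne')).deriv,
    hurwitzSum_eq_inv_pow_add x le_rfl]
  ring

lemma trigamma_eventuallyEq {x : ℝ} (hx : 0 < x) : trigamma =ᶠ[𝓝 x] hurwitzSum 2 :=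
  eventuallyEq_of_mem (Ioi_mem_nhds hx) fun _ => trigamma_eq

lemma tetragamma_eq {x : ℝ} (hx : 0 < x) : tetragamma x = -2 * hurwitzSum 3 x := by
  rw [tetragamma, (trigamma_eventuallyEq hx).deriv_eq, (hasDerivAt_hurwitzSum le_rfl hx).deriv]
  norm_num

lemma tetragamma_eventuallyEq {x : ℝ} (hx : 0 < x) :
    tetragamma =ᶠ[𝓝 x] fun t => -2 * hurwitzSum 3 t :=
  eventuallyEq_of_mem (Ioi_mem_nhds hx) fun _ => tetragamma_eq

lemma pentagamma_eq {x : ℝ} (hx : 0 < x) : pentagamma x = 6 * hurwitzSum 4 x := by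
  rw [pentagamma, (tetragamma_eventuallyEq hx).deriv_eq,
    ((hasDerivAt_hurwitzSum (by norm_num) hx).const_mul (-2)).deriv]
  norm_num
  ring

lemma hasDerivAt_trigamma {x : ℝ} (hx : 0 < x) : HasDerivAt trigamma (tetragamma x) x :=
  ((hasDerivAt_hurwitzSum le_rfl hx).differentiableAt.congr_of_eventuallyEq
    (trigamma_eventuallyEq hx)).hasDerivAt

lemma hasDerivAt_tetragamma {x : ℝ} (hx : 0 < x) : HasDerivAt tetragamma (pentagamma x) x :=
  (((hasDerivAt_hurwitzSum (by norm_num) hx).const_mul (-2)).differentiableAt.congr_of_eventuallyEq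
    (tetragamma_eventuallyEq hx)).hasDerivAt

lemma exp_neg_lt_one {s : ℝ} (hs : 0 < s) : exp (-s) < 1 := exp_lt_one_iff.2 (neg_neg_of_pos hs)

lemma hasSum_sq_mul_geometric {r : ℝ} (hr : ‖r‖ < 1) :
    HasSum (fun n : ℕ => (n : ℝ) ^ 2 * r ^ n) (r * (1 + r) / (1 - r) ^ 3) := by
  have hr1 : 1 - r ≠ 0 := sub_ne_zero.2 fun h => by simp [← h] at hr
  have hS := (summable_pow_mul_geometric_of_norm_lt_one 2 hr).hasSum
  set S := ∑' n : ℕ, (n : ℝ) ^ 2 * r ^ n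
  have hshift : HasSum (fun n : ℕ => ((n + 1 : ℕ) : ℝ) ^ 2 * r ^ (n + 1)) S := by
    simpa using (hasSum_nat_add_iff' 1).2 hS
  have hexpand : HasSum (fun n : ℕ => ((n + 1 : ℕ) : ℝ) ^ 2 * r ^ (n + 1))
      (r * S + 2 * r * (r / (1 - r) ^ 2) + r * (1 - r)⁻¹) := by
    refine (((hS.mul_left r).add
      ((hasSum_coe_mul_geometric_of_norm_lt_one hr).mul_left (2 * r))).add
      ((hasSum_geometric_of_norm_lt_one hr).mul_left r)).congr_fun fun n => ?_
    push_cast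
    ring
  have h := hshift.unique hexpand
  rwa [show r * (1 + r) / (1 - r) ^ 3 = S by field_simp at h ⊢; linear_combination -h]

/-- `tanh (s / 2) < s / 2`. -/
lemma two_mul_one_sub_exp_neg_lt {s : ℝ} (hs : 0 < s) :
    2 * (1 - exp (-s)) < s * (1 + exp (-s)) := by
  let g : ℝ → ℝ := fun t => t * (1 + exp (-t)) - 2 * (1 - exp (-t))
  have hg : ∀ t, HasDerivAt g (exp (-t) * (exp t - (1 + t))) t := by
    intro t
    have he : HasDerivAt (fun t => exp (-t)) (-exp (-t)) t := by
      simpa using (hasDerivAt_neg t).exp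
    refine (((hasDerivAt_id t).mul (he.const_add 1)).sub
      ((he.const_sub 1).const_mul 2)).congr_deriv ?_
    rw [mul_sub, ← exp_add, neg_add_cancel, exp_zero]
    simp only [id]
    ring
  have hmono : StrictMonoOn g (Ici 0) :=
    strictMonoOn_of_hasDerivWithinAt_pos (convex_Ici 0) (by fun_prop)
      (fun t _ => (hg t).hasDerivWithinAt) fun t ht => by
        rw [interior_Ici, mem_Ioi] at ht
        have := add_one_lt_exp ht.ne'
        exact mul_pos (exp_pos _) (by linarith)
  have := hmono self_mem_Ici hs.le hs
  norm_num [g] at this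
  linarith

lemma integral_pow_mul_exp_neg_mul (n : ℕ) {c : ℝ} (hc : 0 < c) :
    ∫ s in Ioi 0, s ^ n * exp (-(c * s)) = n ! / c ^ (n + 1) := by
  have h := integral_rpow_mul_exp_neg_mul_Ioi (a := n + 1) (by positivity) hc
  simp only [add_sub_cancel_right, rpow_natCast] at h
  rw [h, Gamma_nat_eq_factorial, ← Nat.cast_add_one, rpow_natCast, one_div_pow]
  ring

lemma integrableOn_pow_mul_exp_neg_mul (n : ℕ) {c : ℝ} (hc : 0 < c) :
    IntegrableOn (fun s => s ^ n * exp (-(c * s))) (Ioi 0) :=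
  .of_integral_ne_zero (by rw [integral_pow_mul_exp_neg_mul n hc]; positivity)

/-- `s² e^(-us) f''(s)` for `f s = s / (1 - e^(-s))`; `phiTerm u k s` are the terms of its
expansion in powers of `e^(-s)`. -/
noncomputable def phi (u s : ℝ) : ℝ :=
  s ^ 2 * exp (-(u * s)) * exp (-s) * (s * (1 + exp (-s)) - 2 * (1 - exp (-s))) /
    (1 - exp (-s)) ^ 3

noncomputable def phiTerm (u : ℝ) (k : ℕ) (s : ℝ) : ℝ :=
  k ^ 2 * (s ^ 3 * exp (-((u + k) * s))) - 2 * k * (s ^ 2 * exp (-((u + k) * s)))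

section phi

variable {u s : ℝ}

lemma phi_pos (hs : 0 < s) : 0 < phi u s := by
  have := two_mul_one_sub_exp_neg_lt hs
  have := exp_neg_lt_one hs
  exact div_pos (mul_pos (by positivity) (by linarith)) (pow_pos (by linarith) 3)

lemma hasSum_phiTerm (u : ℝ) (hs : 0 < s) : HasSum (fun k => phiTerm u k s) (phi u s) := by
  have hx : ‖exp (-s)‖ < 1 := by rw [norm_of_nonneg (exp_pos _).le]; exact exp_neg_lt_one hs
  have hx1 : 1 - exp (-s) ≠ 0 := (sub_pos.2 (exp_neg_lt_one hs)).ne'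
  have h := ((hasSum_sq_mul_geometric hx).mul_left (s ^ 3 * exp (-(u * s)))).sub
    ((hasSum_coe_mul_geometric_of_norm_lt_one hx).mul_left (2 * s ^ 2 * exp (-(u * s))))
  rw [show phi u s = s ^ 3 * exp (-(u * s)) * (exp (-s) * (1 + exp (-s)) / (1 - exp (-s)) ^ 3) -
      2 * s ^ 2 * exp (-(u * s)) * (exp (-s) / (1 - exp (-s)) ^ 2) by rw [phi]; field_simp]
  refine h.congr_fun fun k => ?_
  have e : exp (-((u + k) * s)) = exp (-(u * s)) * exp (-s) ^ k := by
    rw [← exp_nat_mul, ← exp_add]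
    ring_nf
  rw [phiTerm, e]
  ring

lemma phi_le (hs : 0 < s) :
    phi u s ≤ 8 * (exp (-((u + 1) * s)) + s ^ 3 * exp (-((u + 1) * s))) := by
  set x := exp (-s)
  set p := exp (-(u * s))
  have hx1 : x < 1 := exp_neg_lt_one hs
  have hx0 : 0 < x := exp_pos _
  have hp : 0 < p := exp_pos _
  have hs_le : s ≤ (1 - x) * (1 + s) := by
    have h := mul_le_mul_of_nonneg_left (add_one_le_exp s) hx0.le
    rw [← exp_add, neg_add_cancel, exp_zero] at h
    linarith
  rw [show exp (-((u + 1) * s)) = p * x by rw [← exp_add]; ring_nf, phi,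
    div_le_iff₀ (pow_pos (by linarith) 3)]
  calc s ^ 2 * p * x * (s * (1 + x) - 2 * (1 - x))
      ≤ 2 * p * x * s ^ 3 := by nlinarith [mul_pos (mul_pos (pow_pos hs 2) hp) hx0]
    _ ≤ 2 * p * x * ((1 - x) * (1 + s)) ^ 3 := by gcongr
    _ ≤ 8 * (p * x + s ^ 3 * (p * x)) * (1 - x) ^ 3 := by
      rw [mul_pow]
      have : 0 < p * x * (1 - x) ^ 3 := by have := sub_pos.2 hx1; positivity
      nlinarith [mul_nonneg this.le (mul_nonneg (sq_nonneg (1 - s)) (by linarith : (0:ℝ) ≤ 1 + s))]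

lemma integrableOn_phiTerm (hu : 0 < u) (k : ℕ) : IntegrableOn (phiTerm u k) (Ioi 0) := by
  have hk : 0 < u + k := by positivity
  exact ((integrableOn_pow_mul_exp_neg_mul 3 hk).const_mul _).sub
    ((integrableOn_pow_mul_exp_neg_mul 2 hk).const_mul _)

lemma integral_phiTerm (hu : 0 < u) (k : ℕ) :
    ∫ s in Ioi 0, phiTerm u k s = 6 * k ^ 2 / (u + k) ^ 4 - 4 * k / (u + k) ^ 3 := by
  have hk : 0 < u + k := by positivity
  simp only [phiTerm]
  rw [integral_sub ((integrableOn_pow_mul_exp_neg_mul 3 hk).const_mul _)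
      ((integrableOn_pow_mul_exp_neg_mul 2 hk).const_mul _), integral_const_mul, integral_const_mul,
    integral_pow_mul_exp_neg_mul 3 hk, integral_pow_mul_exp_neg_mul 2 hk]
  norm_num [Nat.factorial]
  ring

lemma integral_norm_phiTerm_le (hu : 0 < u) (k : ℕ) :
    ∫ s in Ioi 0, ‖phiTerm u k s‖ ≤ 10 * ((u + k) ^ 2)⁻¹ := by
  have hk : 0 < u + k := by positivity
  have hA := (integrableOn_pow_mul_exp_neg_mul 3 hk).const_mul ((k : ℝ) ^ 2)
  have hB := (integrableOn_pow_mul_exp_neg_mul 2 hk).const_mul (2 * (k : ℝ))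
  calc ∫ s in Ioi 0, ‖phiTerm u k s‖
      ≤ ∫ s in Ioi 0, (k ^ 2 * (s ^ 3 * exp (-((u + k) * s))) +
          2 * k * (s ^ 2 * exp (-((u + k) * s)))) := by
        refine setIntegral_mono_on (integrableOn_phiTerm hu k).norm (hA.add hB) measurableSet_Ioi
          fun s hs => (norm_sub_le _ _).trans_eq ?_
        rw [mem_Ioi] at hs
        rw [norm_of_nonneg (by positivity), norm_of_nonneg (by positivity)]
    _ = 6 * k ^ 2 / (u + k) ^ 4 + 4 * k / (u + k) ^ 3 := by
        rw [integral_add hA hB, integral_const_mul, integral_const_mul,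
          integral_pow_mul_exp_neg_mul 3 hk, integral_pow_mul_exp_neg_mul 2 hk]
        norm_num [Nat.factorial]
        ring
    _ ≤ 10 * ((u + k) ^ 2)⁻¹ := by
        have hk0 : (0 : ℝ) ≤ k := k.cast_nonneg
        rw [div_add_div _ _ (by positivity) (by positivity), div_le_iff₀ (by positivity)]
        field_simp
        nlinarith [mul_pos hu hk]

lemma hasSum_integral_phi (hu : 0 < u) :
    HasSum (fun k : ℕ => 6 * k ^ 2 / (u + k) ^ 4 - 4 * k / (u + k) ^ 3)
      (∫ s in Ioi 0, phi u s) := by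
  have hsum : Summable fun k : ℕ => ∫ s in Ioi 0, ‖phiTerm u k s‖ :=
    .of_nonneg_of_le (fun k => integral_nonneg fun s => norm_nonneg _)
      (integral_norm_phiTerm_le hu) ((summable_inv_add_pow u le_rfl).mul_left 10)
  have h := hasSum_integral_of_summable_integral_norm (integrableOn_phiTerm hu) hsum
  simp only [integral_phiTerm hu] at h
  rwa [setIntegral_congr_fun measurableSet_Ioi fun s hs => (hasSum_phiTerm u hs).tsum_eq] at h

lemma integrableOn_phi (hu : -1 < u) : IntegrableOn (phi u) (Ioi 0) := by
  have hc : 0 < u + 1 := by linarith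
  have hbound := ((integrableOn_pow_mul_exp_neg_mul 0 hc).add
    (integrableOn_pow_mul_exp_neg_mul 3 hc)).const_mul 8
  simp only [pow_zero, one_mul] at hbound
  have hcont : ContinuousOn (phi u) (Ioi 0) := by
    refine ContinuousOn.div (by fun_prop) (by fun_prop) fun s hs => ?_
    exact pow_ne_zero 3 (sub_pos.2 (exp_neg_lt_one hs)).ne'
  refine hbound.mono' (hcont.aestronglyMeasurable measurableSet_Ioi) ?_
  filter_upwards [ae_restrict_mem measurableSet_Ioi] with s hs
  rw [norm_of_nonneg (phi_pos hs).le]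
  exact phi_le hs

lemma integral_phi_pos (hu : -1 < u) : 0 < ∫ s in Ioi 0, phi u s := by
  refine (setIntegral_pos_iff_support_of_nonneg_ae ?_ (integrableOn_phi hu)).2 ?_
  · filter_upwards [ae_restrict_mem measurableSet_Ioi] with s hs using (phi_pos hs).le
  · have hsupp : Ioi 0 ⊆ Function.support (phi u) := fun s hs => (phi_pos hs).ne'
    rw [inter_eq_right.2 hsupp, volume_Ioi]
    exact ENNReal.zero_lt_top

end phi

lemma two_trigamma_add_four_mul_tetragamma_add_sq_mul_pentagamma_pos {u : ℝ} (hu : 0 < u) :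
    0 < 2 * trigamma u + 4 * u * tetragamma u + u ^ 2 * pentagamma u := by
  have hE : HasSum (fun k : ℕ => 6 * k ^ 2 / (u + k) ^ 4 - 4 * k / (u + k) ^ 3)
      (2 * trigamma u + 4 * u * tetragamma u + u ^ 2 * pentagamma u) := by
    rw [trigamma_eq hu, tetragamma_eq hu, pentagamma_eq hu, show
      2 * hurwitzSum 2 u + 4 * u * (-2 * hurwitzSum 3 u) + u ^ 2 * (6 * hurwitzSum 4 u) =
        2 * hurwitzSum 2 u + -8 * u * hurwitzSum 3 u + 6 * u ^ 2 * hurwitzSum 4 u by ring]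
    refine (((summable_inv_add_pow u le_rfl).hasSum.mul_left 2).add
      ((summable_inv_add_pow u (m := 3) (by norm_num)).hasSum.mul_left (-8 * u))).add
      ((summable_inv_add_pow u (m := 4) (by norm_num)).hasSum.mul_left (6 * u ^ 2))
      |>.congr_fun fun k => ?_
    have hk : 0 < u + k := by positivity
    field_simp
    ring
  rw [hE.unique (hasSum_integral_phi hu)]
  exact integral_phi_pos (by linarith)

lemma hasDerivAt_Hfun_summand {a y : ℝ} (ha : 0 < a) (hy : 0 < y) :
    HasDerivAt (fun y => 2 * y * trigamma (y * a) + y ^ 2 * (a * tetragamma (y * a)))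
      (2 * trigamma (y * a) + 4 * y * a * tetragamma (y * a) +
        y ^ 2 * a ^ 2 * pentagamma (y * a)) y := by
  have hya : 0 < y * a := mul_pos hy ha
  have h1 := (hasDerivAt_trigamma hya).comp y (hasDerivAt_mul_const a)
  have h2 := (hasDerivAt_tetragamma hya).comp y (hasDerivAt_mul_const a)
  refine ((((hasDerivAt_id y).const_mul 2).fun_mul h1).fun_add
    ((hasDerivAt_pow 2 y).fun_mul (h2.const_mul a))).congr_deriv ?_
  simp only [id, Function.comp_apply]
  ring

lemma Hfun_summand_deriv_pos {a y : ℝ} (ha : 0 < a) (hy : 0 < y) :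
    0 < 2 * trigamma (y * a) + 4 * y * a * tetragamma (y * a) +
      y ^ 2 * a ^ 2 * pentagamma (y * a) := by
  have h := two_trigamma_add_four_mul_tetragamma_add_sq_mul_pentagamma_pos (mul_pos hy ha)
  rw [mul_pow, ← mul_assoc] at h
  exact h

lemma hasDerivAt_Hfun {x y : ℝ} (hx : x ∈ Ioo 0 1) (hy : 0 < y) :
    HasDerivAt (fun y => Hfun x y)
      ((2 * trigamma (y * x) + 4 * y * x * tetragamma (y * x) +
          y ^ 2 * x ^ 2 * pentagamma (y * x)) +
        (2 * trigamma (y * (1 - x)) + 4 * y * (1 - x) * tetragamma (y * (1 - x)) +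
          y ^ 2 * (1 - x) ^ 2 * pentagamma (y * (1 - x)))) y :=
  ((hasDerivAt_Hfun_summand hx.1 hy).fun_add (hasDerivAt_Hfun_summand (sub_pos.2 hx.2) hy))
    |>.congr_of_eventuallyEq (.of_forall fun y => by simp only [Hfun]; ring)

/-- For every fixed `x ∈ (0,1)`, the function `y ↦ H(x,y)` is strictly increasing on
`(0,∞)`; equivalently, `2ψ'(yx) + 4yx·ψ''(yx) + y²x²·ψ'''(yx) + 2ψ'(y(1−x))
+ 4y(1−x)·ψ''(y(1−x)) + y²(1−x)²·ψ'''(y(1−x)) > 0` for all `x ∈ (0,1)`, `y > 0`. -/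
theorem Hfun_strictMonoOn :
    (∀ x : ℝ, x ∈ Ioo (0 : ℝ) 1 →
        StrictMonoOn (fun y : ℝ => Hfun x y) (Ioi (0 : ℝ))) ∧
      (∀ x y : ℝ, x ∈ Ioo (0 : ℝ) 1 → 0 < y →
        0 < 2 * trigamma (y * x) + 4 * y * x * tetragamma (y * x) +
            y ^ 2 * x ^ 2 * pentagamma (y * x) +
            2 * trigamma (y * (1 - x)) +
            4 * y * (1 - x) * tetragamma (y * (1 - x)) +
            y ^ 2 * (1 - x) ^ 2 * pentagamma (y * (1 - x))) := by
  have hpos := fun x y (hx : x ∈ Ioo (0 : ℝ) 1) (hy : 0 < y) =>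
    add_pos (Hfun_summand_deriv_pos hx.1 hy) (Hfun_summand_deriv_pos (sub_pos.2 hx.2) hy)
  refine ⟨fun x hx => ?_, fun x y hx hy => by linarith [hpos x y hx hy]⟩
  refine strictMonoOn_of_deriv_pos (convex_Ioi 0)
    (fun y hy => (hasDerivAt_Hfun hx hy).continuousAt.continuousWithinAt) fun y hy => ?_
  rw [interior_Ioi] at hy
  rw [(hasDerivAt_Hfun hx hy).deriv]
  exact hpos x y hx hy
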